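/- arXiv:0904.1227 — 6 statements merged into one kernel-verified Lean document; each statement's English description precedes it below -/
import Mathlib

section
/- Let n ≥ 2. For every subset S of the set {-1,1}^n of sign vectors, the set O_n ∪ ⋃_{s ∈ S} peak_s (the cross polytope with the peaks attached to the facets indexed by S) is a convex set. -/
open MeasureTheory Set

/-- The cross polytope `O_n`: the convex hull of `{±e_i : i ∈ [n]}`. -/
noncomputable def crossPolytope (n : ℕ) : Set (Fin n → ℝ) :=
  convexHull ℝ ((Set.range fun i : Fin n => Pi.single i (1 : ℝ)) ∪
    (Set.range fun i : Fin n => Pi.single i (-1 : ℝ)))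

/-- The set of sign vectors `{-1,1}^n`, indexing the facets of the cross polytope. -/
def Signs (n : ℕ) : Set (Fin n → ℝ) := {s | ∀ i, s i = 1 ∨ s i = -1}

/-- The peak attached to the facet `F_s = conv{s_i e_i}`, namely
`conv(F_s ∪ {s/(n-1)})`. -/
noncomputable def peak (n : ℕ) (s : Fin n → ℝ) : Set (Fin n → ℝ) :=
  convexHull ℝ ((Set.range fun i : Fin n => Pi.single i (s i)) ∪ {((n : ℝ) - 1)⁻¹ • s})

open Classical in
/-- Halfspace description of the cross polytope with peaks attached over `S`. -/
noncomputable def Kset (n : ℕ) (S : Set (Fin n → ℝ)) : Set (Fin n → ℝ) :=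
  {x | ∀ s ∈ Signs n,
    (∑ j, s j * x j ≤ if s ∈ S then (n : ℝ) * ((n : ℝ) - 1)⁻¹ else 1) ∧
    ∀ i : Fin n, ∑ j ∈ Finset.univ.erase i, s j * x j ≤ 1}

lemma dot_single {n : ℕ} (s : Fin n → ℝ) (t : Finset (Fin n)) (i : Fin n) (c : ℝ) :
    ∑ j ∈ t, s j * (Pi.single i c : Fin n → ℝ) j = if i ∈ t then s i * c else 0 := by
  simp [Pi.single_apply, mul_ite, mul_zero, Finset.sum_ite_eq']

lemma Kset_convex (n : ℕ) (S : Set (Fin n → ℝ)) : Convex ℝ (Kset n S) := by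
  classical
  intro x hx y hy a b ha hb hab
  intro s hs
  have key : ∀ t : Finset (Fin n), ∑ j ∈ t, s j * (a • x + b • y) j
      = a * (∑ j ∈ t, s j * x j) + b * (∑ j ∈ t, s j * y j) := by
    intro t
    rw [Finset.mul_sum, Finset.mul_sum, ← Finset.sum_add_distrib]
    refine Finset.sum_congr rfl fun j _ => ?_
    simp only [Pi.add_apply, Pi.smul_apply, smul_eq_mul]
    ring
  have comb : ∀ u v c : ℝ, u ≤ c → v ≤ c → a * u + b * v ≤ c := by
    intro u v c hu hv
    calc a * u + b * v ≤ a * c + b * c :=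
          add_le_add (mul_le_mul_of_nonneg_left hu ha) (mul_le_mul_of_nonneg_left hv hb)
      _ = c := by rw [← add_mul, hab, one_mul]
  exact ⟨by rw [key]; exact comb _ _ _ (hx s hs).1 (hy s hs).1,
    fun i => by rw [key]; exact comb _ _ _ ((hx s hs).2 i) ((hy s hs).2 i)⟩

lemma one_le_bound {n : ℕ} (hn : 2 ≤ n) : (1 : ℝ) ≤ (n : ℝ) * ((n : ℝ) - 1)⁻¹ := by
  have hpos : (0 : ℝ) < (n : ℝ) - 1 := by
    have : (2 : ℝ) ≤ (n : ℝ) := by exact_mod_cast hn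
    linarith
  rw [← div_eq_mul_inv, le_div_iff₀ hpos]
  linarith

lemma signs_dot_le_card {n : ℕ} {s s0 : Fin n → ℝ} (hs : s ∈ Signs n) (hs0 : s0 ∈ Signs n)
    (t : Finset (Fin n)) : ∑ j ∈ t, s j * s0 j ≤ (t.card : ℝ) := by
  calc ∑ j ∈ t, s j * s0 j ≤ ∑ _j ∈ t, (1 : ℝ) := by
        refine Finset.sum_le_sum fun j _ => ?_
        rcases hs j with h | h <;> rcases hs0 j with h' | h' <;> rw [h, h'] <;> norm_num
    _ = (t.card : ℝ) := by simp

lemma union_subset_Kset (n : ℕ) (hn : 2 ≤ n) (S : Set (Fin n → ℝ)) (hS : S ⊆ Signs n) :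
    crossPolytope n ∪ (⋃ s ∈ S, peak n s) ⊆ Kset n S := by
  classical
  have hpos : (0 : ℝ) < (n : ℝ) - 1 := by
    have : (2 : ℝ) ≤ (n : ℝ) := by exact_mod_cast hn
    linarith
  have hbound : ∀ s : Fin n → ℝ, (1 : ℝ) ≤ if s ∈ S then (n : ℝ) * ((n : ℝ) - 1)⁻¹ else 1 := by
    intro s; split_ifs
    · exact one_le_bound hn
    · exact le_refl 1
  -- generators of the form `Pi.single i c` with `|c| ≤ 1`
  have hsingle : ∀ (i : Fin n) (c : ℝ), c = 1 ∨ c = -1 →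
      (Pi.single i c : Fin n → ℝ) ∈ Kset n S := by
    intro i c hc s hs
    have h1 : s i * c ≤ 1 := by
      rcases hs i with h | h <;> rcases hc with h' | h' <;> rw [h, h'] <;> norm_num
    constructor
    · rw [dot_single]
      simp only [Finset.mem_univ, if_true]
      exact le_trans h1 (hbound s)
    · intro i'
      rw [dot_single]
      split_ifs
      · exact h1
      · norm_num
  apply Set.union_subset
  · -- cross polytope
    apply convexHull_min _ (Kset_convex n S)
    rintro p (⟨i, rfl⟩ | ⟨i, rfl⟩)
    · exact hsingle i 1 (Or.inl rfl)
    · exact hsingle i (-1) (Or.inr rfl)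
  · -- peaks
    refine Set.iUnion₂_subset fun s0 hs0 => ?_
    apply convexHull_min _ (Kset_convex n S)
    rintro p (⟨i, rfl⟩ | hp)
    · exact hsingle i (s0 i) (hS hs0 i)
    · -- apex
      rw [Set.mem_singleton_iff] at hp
      subst hp
      intro s hs
      have hdot : ∀ t : Finset (Fin n),
          ∑ j ∈ t, s j * (((n : ℝ) - 1)⁻¹ • s0) j
            = ((n : ℝ) - 1)⁻¹ * ∑ j ∈ t, s j * s0 j := by
        intro t
        rw [Finset.mul_sum]
        refine Finset.sum_congr rfl fun j _ => ?_
        simp only [Pi.smul_apply, smul_eq_mul]; ring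
      constructor
      · rw [hdot]
        by_cases hss : s = s0
        · subst hss
          have : ∑ j, s j * s j = (n : ℝ) := by
            calc ∑ j, s j * s j = ∑ _j : Fin n, (1 : ℝ) := by
                  refine Finset.sum_congr rfl fun j _ => ?_
                  rcases hs j with h | h <;> rw [h] <;> norm_num
              _ = (n : ℝ) := by simp
          rw [this, if_pos hs0, mul_comm]
        · -- s ≠ s0 : sum ≤ n - 2 ≤ n - 1
          obtain ⟨j0, hj0⟩ : ∃ j0, s j0 ≠ s0 j0 := by
            by_contra h; push_neg at h; exact hss (funext h)
          have hterm : s j0 * s0 j0 = -1 := by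
            rcases hs j0 with h | h <;> rcases hS hs0 j0 with h' | h'
            · exact absurd (h.trans h'.symm) hj0
            · rw [h, h']; norm_num
            · rw [h, h']; norm_num
            · exact absurd (h.trans h'.symm) hj0
          have hsum : ∑ j, s j * s0 j ≤ (n : ℝ) - 2 := by
            rw [← Finset.add_sum_erase _ _ (Finset.mem_univ j0), hterm]
            have := signs_dot_le_card hs (hS hs0) (Finset.univ.erase j0)
            have hcard : ((Finset.univ.erase j0).card : ℝ) = (n : ℝ) - 1 := by
              rw [Finset.card_erase_of_mem (Finset.mem_univ j0)]
              simp only [Finset.card_univ, Fintype.card_fin]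
              have : 1 ≤ n := le_trans one_le_two hn
              push_cast [Nat.cast_sub this]
              ring
            linarith [this, hcard ▸ this]
          have : ((n : ℝ) - 1)⁻¹ * ∑ j, s j * s0 j ≤ 1 := by
            have h2 : ∑ j, s j * s0 j ≤ (n : ℝ) - 1 := by linarith
            calc ((n : ℝ) - 1)⁻¹ * ∑ j, s j * s0 j
                ≤ ((n : ℝ) - 1)⁻¹ * ((n : ℝ) - 1) :=
                  mul_le_mul_of_nonneg_left h2 (le_of_lt (inv_pos.mpr hpos))
              _ = 1 := inv_mul_cancel₀ (ne_of_gt hpos)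
          exact le_trans this (hbound s)
      · intro i
        rw [hdot]
        have := signs_dot_le_card hs (hS hs0) (Finset.univ.erase i)
        have hcard : ((Finset.univ.erase i).card : ℝ) = (n : ℝ) - 1 := by
          rw [Finset.card_erase_of_mem (Finset.mem_univ i)]
          simp only [Finset.card_univ, Fintype.card_fin]
          have : 1 ≤ n := le_trans one_le_two hn
          push_cast [Nat.cast_sub this]
          ring
        calc ((n : ℝ) - 1)⁻¹ * ∑ j ∈ Finset.univ.erase i, s j * s0 j
            ≤ ((n : ℝ) - 1)⁻¹ * ((n : ℝ) - 1) :=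
              mul_le_mul_of_nonneg_left (hcard ▸ this) (le_of_lt (inv_pos.mpr hpos))
          _ = 1 := inv_mul_cancel₀ (ne_of_gt hpos)

lemma mem_convexHull_of_comb {n : ℕ} {α : Type*} [Fintype α] {V : Set (Fin n → ℝ)}
    (w : α → ℝ) (z : α → Fin n → ℝ) (hw : ∀ a, 0 ≤ w a) (hsum : ∑ a, w a = 1)
    (hz : ∀ a, z a ∈ V) {x : Fin n → ℝ} (hx : ∑ a, w a • z a = x) :
    x ∈ convexHull ℝ V :=
  hx ▸ (convex_convexHull ℝ V).sum_mem (fun a _ => hw a) hsum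
    (fun a _ => subset_convexHull ℝ V (hz a))

lemma Kset_subset_union (n : ℕ) (hn : 2 ≤ n) (S : Set (Fin n → ℝ)) (hS : S ⊆ Signs n) :
    Kset n S ⊆ crossPolytope n ∪ (⋃ s ∈ S, peak n s) := by
  classical
  have hn2 : (2 : ℝ) ≤ (n : ℝ) := by exact_mod_cast hn
  have hpos : (0 : ℝ) < (n : ℝ) - 1 := by linarith
  have hnne : (n : ℝ) ≠ 0 := by linarith
  intro x hx
  set t : ℝ := ∑ j, |x j| with ht_def
  by_cases ht : t ≤ 1
  · -- inside the cross polytope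
    left
    set r : ℝ := (1 - t) / (2 * n) with hr_def
    have hr : 0 ≤ r := div_nonneg (by linarith) (by linarith)
    set w : Bool × Fin n → ℝ :=
      fun p => (if p.1 then (|x p.2| + x p.2) / 2 else (|x p.2| - x p.2) / 2) + r with hw_def
    refine mem_convexHull_of_comb w
      (fun p => Pi.single p.2 (if p.1 then (1 : ℝ) else -1)) ?_ ?_ ?_ ?_
    · rintro ⟨b, i⟩
      have h1 := le_abs_self (x i)
      have h2 := neg_abs_le (x i)
      cases b <;> simp only [hw_def, if_true, if_false, Bool.false_eq_true] <;> linarith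
    · rw [Fintype.sum_prod_type, Fintype.sum_bool]
      simp only [hw_def, if_true, if_false, Bool.false_eq_true]
      rw [← Finset.sum_add_distrib]
      have : ∀ i ∈ Finset.univ, ((|x i| + x i) / 2 + r) + ((|x i| - x i) / 2 + r)
          = |x i| + 2 * r := fun i _ => by ring
      rw [Finset.sum_congr rfl this, Finset.sum_add_distrib, Finset.sum_const,
        Finset.card_univ, Fintype.card_fin, nsmul_eq_mul, ← ht_def, hr_def]
      field_simp
      ring
    · rintro ⟨b, i⟩
      cases b
      · exact Set.mem_union_right _ ⟨i, rfl⟩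
      · exact Set.mem_union_left _ ⟨i, rfl⟩
    · funext k
      rw [Finset.sum_apply, Fintype.sum_prod_type, Fintype.sum_bool]
      simp only [Pi.smul_apply, smul_eq_mul, Pi.single_apply, mul_ite, mul_zero, mul_one,
        Finset.sum_ite_eq, Finset.mem_univ, if_true, if_false, Bool.false_eq_true, hw_def]
      ring
  · -- in a peak
    push_neg at ht
    right
    set s : Fin n → ℝ := fun j => if 0 ≤ x j then 1 else -1 with hs_def
    have hsS : s ∈ Signs n := fun j => by
      by_cases h : 0 ≤ x j <;> simp [hs_def, h]
    have hsx : ∀ j, s j * x j = |x j| := by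
      intro j
      by_cases h : 0 ≤ x j
      · simp [hs_def, h, abs_of_nonneg h]
      · simp [hs_def, h, abs_of_neg (lt_of_not_ge h)]
    have hss : ∀ j, s j * s j = 1 := by
      intro j; rcases hsS j with h | h <;> rw [h] <;> norm_num
    have hdot : ∑ j, s j * x j = t := by
      rw [ht_def]; exact Finset.sum_congr rfl fun j _ => hsx j
    obtain ⟨h1, h2⟩ := hx s hsS
    have hsmem : s ∈ S := by
      by_contra hc
      rw [if_neg hc, hdot] at h1
      linarith
    rw [if_pos hsmem, hdot] at h1
    have hxi : ∀ i, t - 1 ≤ |x i| := by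
      intro i
      have := h2 i
      rw [Finset.sum_erase_eq_sub (Finset.mem_univ i), hdot, hsx i] at this
      linarith
    have hμsum : ∑ i, (|x i| - (t - 1)) = t - (n : ℝ) * (t - 1) := by
      rw [Finset.sum_sub_distrib, Finset.sum_const, Finset.card_univ, Fintype.card_fin,
        nsmul_eq_mul, ← ht_def]
    refine Set.mem_biUnion hsmem ?_
    refine mem_convexHull_of_comb (α := Option (Fin n))
      (fun o => o.elim (((n : ℝ) - 1) * (t - 1)) (fun i => |x i| - (t - 1)))
      (fun o => o.elim (((n : ℝ) - 1)⁻¹ • s) (fun i => Pi.single i (s i))) ?_ ?_ ?_ ?_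
    · rintro (_ | i)
      · have : 0 ≤ t - 1 := by linarith
        exact mul_nonneg (le_of_lt hpos) this
      · have := hxi i
        simp only [Option.elim]
        linarith
    · rw [Fintype.sum_option]
      simp only [Option.elim]
      rw [hμsum]
      ring
    · rintro (_ | i)
      · exact Set.mem_union_right _ rfl
      · exact Set.mem_union_left _ ⟨i, rfl⟩
    · funext k
      rw [Finset.sum_apply, Fintype.sum_option]
      simp only [Option.elim, Pi.smul_apply, smul_eq_mul, Pi.single_apply, mul_ite, mul_zero,
        Finset.sum_ite_eq, Finset.mem_univ, if_true]
      have hinv : ((n : ℝ) - 1) * (t - 1) * (((n : ℝ) - 1)⁻¹ * s k) = (t - 1) * s k := by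
        field_simp
      rw [hinv]
      have : (t - 1) * s k + (|x k| - (t - 1)) * s k = |x k| * s k := by ring
      rw [this, ← hsx k]
      linear_combination x k * hss k

theorem crossPolytopeWithPeaks_convex (n : ℕ) (hn : 2 ≤ n)
    (S : Set (Fin n → ℝ)) (hS : S ⊆ Signs n) :
    Convex ℝ (crossPolytope n ∪ ⋃ s ∈ S, peak n s) := by
  have heq : crossPolytope n ∪ (⋃ s ∈ S, peak n s) = Kset n S :=
    Set.Subset.antisymm (union_subset_Kset n hn S hS) (Kset_subset_union n hn S hS)
  rw [heq]
  exact Kset_convex n S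
end

section
/- Let n ≥ 2. The cross polytope with all 2^n peaks, P := O_n ∪ ⋃_{s ∈ {-1,1}^n} peak_s, equals the polytope Q := ⋂ { x ∈ ℝ^n : a·x ≤ 1 }, where the intersection is over all vectors a ∈ {-1,0,1}^n having exactly one zero entry. -/
open MeasureTheory Set

theorem crossPolytopeWithAllPeaks_eq_polytope (n : ℕ) (hn : 2 ≤ n) :
    (crossPolytope n ∪ ⋃ s ∈ Signs n, peak n s) =
      {x : Fin n → ℝ | ∀ a : Fin n → ℝ,
        (∀ i, a i = -1 ∨ a i = 0 ∨ a i = 1) → (∃! i, a i = 0) →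
        ∑ i, a i * x i ≤ 1} := by
  have hn2 : (2:ℝ) ≤ (n:ℝ) := by exact_mod_cast hn
  have hn1pos : (0:ℝ) < (n:ℝ) - 1 := by linarith
  ext x
  simp only [Set.mem_union, Set.mem_setOf_eq, Set.mem_iUnion]
  constructor
  · rintro h a ha hz
    have hconv : Convex ℝ {y : Fin n → ℝ | ∑ i, a i * y i ≤ 1} := by
      have hlin : IsLinearMap ℝ (fun y : Fin n → ℝ => ∑ i, a i * y i) := by
        constructor
        · intro y z; simp [Pi.add_apply, mul_add, Finset.sum_add_distrib]
        · intro c y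
          simp only [Pi.smul_apply, smul_eq_mul, Finset.mul_sum]
          exact Finset.sum_congr rfl fun i _ => by ring
      exact convex_halfSpace_le hlin 1
    rcases h with h | h
    · refine convexHull_min ?_ hconv h
      rintro y (⟨i, rfl⟩ | ⟨i, rfl⟩) <;>
      · simp only [Set.mem_setOf_eq, Pi.single_apply, mul_ite, mul_one, mul_neg_one, mul_zero,
          Finset.sum_ite_eq', Finset.mem_univ, if_true]
        rcases ha i with h' | h' | h' <;> rw [h'] <;> norm_num
    · obtain ⟨s, hs, hx⟩ := h
      refine convexHull_min ?_ hconv hx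
      rintro y (⟨i, rfl⟩ | rfl)
      · simp only [Set.mem_setOf_eq, Pi.single_apply, mul_ite, mul_zero,
          Finset.sum_ite_eq', Finset.mem_univ, if_true]
        rcases ha i with h' | h' | h' <;> rcases hs i with h'' | h'' <;>
          rw [h', h''] <;> norm_num
      · simp only [Set.mem_setOf_eq, Pi.smul_apply, smul_eq_mul]
        obtain ⟨i0, hi0, _⟩ := hz
        have hsum : ∑ i, a i * s i ≤ (n:ℝ) - 1 := by
          rw [← Finset.add_sum_erase _ _ (Finset.mem_univ i0), hi0, zero_mul, zero_add]
          calc ∑ i ∈ Finset.univ.erase i0, a i * s i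
              ≤ ∑ _i ∈ Finset.univ.erase i0, (1:ℝ) := by
                refine Finset.sum_le_sum fun i _ => ?_
                rcases ha i with h' | h' | h' <;> rcases hs i with h'' | h'' <;>
                  rw [h', h''] <;> norm_num
            _ = (n:ℝ) - 1 := by
                rw [Finset.sum_const, Finset.card_erase_of_mem (Finset.mem_univ i0),
                  Finset.card_univ, Fintype.card_fin]
                have h1n : (1:ℕ) ≤ n := by omega
                rw [nsmul_eq_mul, Nat.cast_sub h1n]
                push_cast
                ring
        have : ∑ i, a i * (((n:ℝ) - 1)⁻¹ * s i) = ((n:ℝ) - 1)⁻¹ * ∑ i, a i * s i := by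
          rw [Finset.mul_sum]; exact Finset.sum_congr rfl fun i _ => by ring
        rw [this]
        rw [inv_mul_le_iff₀ hn1pos]
        linarith
  · intro h
    set s : Fin n → ℝ := fun i => if x i < 0 then -1 else 1 with hs_def
    have hs : ∀ i, s i = 1 ∨ s i = -1 := by
      intro i; by_cases hxi : x i < 0 <;> simp [hs_def, hxi]
    have hxs : ∀ j, x j = s j * |x j| := by
      intro j
      by_cases hxj : x j < 0
      · simp [hs_def, hxj, abs_of_neg hxj]
      · push_neg at hxj
        simp [hs_def, not_lt.mpr hxj, abs_of_nonneg hxj]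
    set t : ℝ := ∑ i, |x i| with ht_def
    -- constraint: for each j, t - |x j| ≤ 1
    have key : ∀ j, t - |x j| ≤ 1 := by
      intro j
      set a : Fin n → ℝ := Function.update s j 0 with ha_def
      have ha : ∀ i, a i = -1 ∨ a i = 0 ∨ a i = 1 := by
        intro i
        rcases eq_or_ne i j with rfl | hij
        · simp [ha_def]
        · rcases hs i with h' | h' <;> simp [ha_def, Function.update_of_ne hij, h']
      have hz : ∃! i, a i = 0 := by
        refine ⟨j, by simp [ha_def], fun k hk => ?_⟩
        by_contra hkj
        rw [ha_def, Function.update_of_ne hkj] at hk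
        rcases hs k with h' | h' <;> rw [h'] at hk <;> norm_num at hk
      have := h a ha hz
      have hsum : ∑ i, a i * x i = t - |x j| := by
        rw [ht_def, ← Finset.add_sum_erase _ (fun i => a i * x i) (Finset.mem_univ j),
          ← Finset.add_sum_erase _ (fun i => |x i|) (Finset.mem_univ j)]
        have h1 : a j * x j = 0 := by simp [ha_def]
        have h2 : ∀ i ∈ Finset.univ.erase j, a i * x i = |x i| := by
          intro i hi
          have hij : i ≠ j := Finset.ne_of_mem_erase hi
          rw [ha_def, Function.update_of_ne hij]
          rcases hs i with h' | h' <;> rw [h'] <;>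
            (have hxi := hxs i; rw [h'] at hxi; linarith)
        rw [h1, Finset.sum_congr rfl h2]
        ring
      linarith [hsum ▸ this]
    have ht0 : 0 ≤ t := Finset.sum_nonneg fun i _ => abs_nonneg _
    by_cases ht : t ≤ 1
    · -- x ∈ crossPolytope n
      left
      have hconv : Convex ℝ (crossPolytope n) := convex_convexHull ℝ _
      -- weights over Option (Fin n)
      set w : Option (Fin n) → ℝ := fun o => o.elim (1 - t) (fun i => |x i|) with hw_def
      set z : Option (Fin n) → (Fin n → ℝ) :=
        fun o => o.elim 0 (fun i => Pi.single i (s i)) with hz_def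
      have h0mem : (0 : Fin n → ℝ) ∈ crossPolytope n := by
        have i0 : Fin n := ⟨0, by omega⟩
        have h1 : Pi.single i0 (1:ℝ) ∈ crossPolytope n :=
          subset_convexHull ℝ _ (Or.inl ⟨i0, rfl⟩)
        have h2 : Pi.single i0 (-1:ℝ) ∈ crossPolytope n :=
          subset_convexHull ℝ _ (Or.inr ⟨i0, rfl⟩)
        have := hconv h1 h2 (by norm_num : (0:ℝ) ≤ 1/2) (by norm_num : (0:ℝ) ≤ 1/2)
          (by norm_num)
        convert this using 1
        ext j
        simp [Pi.single_apply]
        split <;> ring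
      have hx_eq : x = ∑ o : Option (Fin n), w o • z o := by
        funext j
        rw [Fintype.sum_option]
        simp only [hw_def, hz_def, Option.elim, Pi.add_apply, Finset.sum_apply,
          Pi.smul_apply, smul_eq_mul, Pi.zero_apply, Pi.single_apply, mul_ite, mul_zero]
        rw [Finset.sum_ite_eq Finset.univ j (fun i => |x i| * s i)]
        simp only [Finset.mem_univ, if_true, mul_zero, zero_add]
        conv_lhs => rw [hxs j]
        ring
      rw [hx_eq]
      refine hconv.sum_mem (fun o _ => ?_) ?_ (fun o _ => ?_)
      · cases o with
        | none => simpa [hw_def] using ht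
        | some i => simp [hw_def, abs_nonneg]
      · rw [Fintype.sum_option]
        simp only [hw_def, Option.elim]
        rw [← ht_def]; ring
      · cases o with
        | none => exact h0mem
        | some i =>
          simp only [hz_def, Option.elim]
          rcases hs i with h' | h'
          · exact subset_convexHull ℝ _ (Or.inl ⟨i, by rw [h']⟩)
          · exact subset_convexHull ℝ _ (Or.inr ⟨i, by rw [h']⟩)
    · -- x ∈ peak n s
      right
      push_neg at ht
      refine ⟨s, hs, ?_⟩
      have hconv : Convex ℝ (peak n s) := convex_convexHull ℝ _
      set w : Option (Fin n) → ℝ :=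
        fun o => o.elim (((n:ℝ) - 1) * (t - 1)) (fun i => |x i| - (t - 1)) with hw_def
      set z : Option (Fin n) → (Fin n → ℝ) :=
        fun o => o.elim (((n:ℝ) - 1)⁻¹ • s) (fun i => Pi.single i (s i)) with hz_def
      have hx_eq : x = ∑ o : Option (Fin n), w o • z o := by
        funext j
        rw [Fintype.sum_option]
        simp only [hw_def, hz_def, Option.elim, Pi.add_apply, Finset.sum_apply,
          Pi.smul_apply, smul_eq_mul, Pi.single_apply, mul_ite, mul_zero]
        rw [Finset.sum_ite_eq Finset.univ j (fun i => (|x i| - (t-1)) * s i)]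
        simp only [Finset.mem_univ, if_true]
        have : ((n:ℝ) - 1) * (t - 1) * (((n:ℝ) - 1)⁻¹ * s j) = (t - 1) * s j := by
          field_simp
        rw [this]
        conv_lhs => rw [hxs j]
        ring
      rw [hx_eq]
      refine hconv.sum_mem (fun o _ => ?_) ?_ (fun o _ => ?_)
      · cases o with
        | none =>
          simp only [hw_def, Option.elim]
          nlinarith
        | some i =>
          simp only [hw_def, Option.elim]
          have := key i; linarith
      · rw [Fintype.sum_option]
        simp only [hw_def, Option.elim]
        rw [Finset.sum_sub_distrib, ← ht_def, Finset.sum_const, Finset.card_univ,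
          Fintype.card_fin, nsmul_eq_mul]
        ring
      · cases o with
        | none => exact subset_convexHull ℝ _ (Or.inr rfl)
        | some i => exact subset_convexHull ℝ _ (Or.inl ⟨i, rfl⟩)
end

section
/- Let n ≥ 2 and let x ∈ ℝ^n satisfy x_i ≥ 0 for all i, ∑_i x_i > 1, and ∑_i x_i ≤ 1 + x_j for every j ∈ [n]. Then x lies in the convex hull of the n+1 points e_1, …, e_n and 𝟙/(n-1), where 𝟙 = (1,…,1); that is, x lies in the peak attached to the facet of the cross polytope in the positive orthant. -/
open Set

theorem sum_smul_add_smul_mem_convexHull_range_union {ι E : Type*} [Fintype ι]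
    [AddCommGroup E] [Module ℝ E] (b : ι → E) (q : E) {y : ι → ℝ} {t : ℝ}
    (hy : ∀ i, 0 ≤ y i) (ht : 0 ≤ t) (hsum : ∑ i, y i + t = 1) :
    ∑ i, y i • b i + t • q ∈ convexHull ℝ (range b ∪ {q}) := by
  let w : Option ι → ℝ := fun o => o.elim t y
  let z : Option ι → E := fun o => o.elim q b
  have hmem : ∑ o, w o • z o ∈ convexHull ℝ (range b ∪ {q}) :=
    (convex_convexHull ℝ _).sum_mem (fun o _ => o.rec ht fun i => hy i)
      (by simpa [w, Fintype.sum_option, add_comm] using hsum)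
      (fun o _ => subset_convexHull ℝ _ <| o.rec (Or.inr rfl) fun i => Or.inl ⟨i, rfl⟩)
  simpa [w, z, Fintype.sum_option, add_comm] using hmem

theorem add_smul_mem_convexHull_single_union {ι : Type*} [Fintype ι] [DecidableEq ι]
    (q : ι → ℝ) {y : ι → ℝ} {t : ℝ}
    (hy : ∀ i, 0 ≤ y i) (ht : 0 ≤ t) (hsum : ∑ i, y i + t = 1) :
    y + t • q ∈ convexHull ℝ ((range fun i => Pi.single i (1 : ℝ)) ∪ {q}) := by
  have hy_eq : ∑ i, y i • (Pi.single i 1 : ι → ℝ) = y := by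
    simp_rw [← Pi.single_smul', smul_eq_mul, mul_one]
    exact Finset.univ_sum_single y
  simpa only [hy_eq] using sum_smul_add_smul_mem_convexHull_range_union
    (fun i => (Pi.single i 1 : ι → ℝ)) q hy ht hsum

theorem mem_positive_peak_general (n : ℕ) (hn : 2 ≤ n) (x : Fin n → ℝ)
    (hxsum : 1 < ∑ i, x i)
    (hxj : ∀ j, ∑ i, x i ≤ 1 + x j) :
    x ∈ convexHull ℝ
      ((Set.range fun i : Fin n => Pi.single i (1 : ℝ)) ∪
        {fun _ : Fin n => ((n : ℝ) - 1)⁻¹}) := by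
  set S := ∑ i, x i
  have hn1 : (0 : ℝ) < n - 1 := by
    have : (2 : ℝ) ≤ n := by exact_mod_cast hn
    linarith
  -- the excess `S - 1` is taken off every coordinate and carried by the apex instead
  have hx : x = (fun i => x i - (S - 1)) + ((S - 1) * (n - 1)) • fun _ => ((n : ℝ) - 1)⁻¹ := by
    funext i
    simp [hn1.ne']
  rw [hx]
  refine add_smul_mem_convexHull_single_union _ (fun i => by linarith [hxj i])
    (mul_nonneg (by linarith) hn1.le) ?_
  simp only [Finset.sum_sub_distrib, Finset.sum_const, Finset.card_univ, Fintype.card_fin,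
    nsmul_eq_mul]
  ring

theorem mem_positive_peak (n : ℕ) (hn : 2 ≤ n) (x : Fin n → ℝ)
    (hx0 : ∀ i, 0 ≤ x i) (hxsum : 1 < ∑ i, x i)
    (hxj : ∀ j, ∑ i, x i ≤ 1 + x j) :
    x ∈ convexHull ℝ
      ((Set.range fun i : Fin n => Pi.single i (1 : ℝ)) ∪
        {fun _ : Fin n => ((n : ℝ) - 1)⁻¹}) :=
  mem_positive_peak_general n hn x hxsum hxj
end

section
/- Let n ≥ 2, let S ⊆ {-1,1}^n, and let t ∈ S. Then (O_n ∪ ⋃_{s ∈ S} peak_s) ∩ { x ∈ ℝ^n : t·x ≤ 1 } = O_n ∪ ⋃_{s ∈ S \ {t}} peak_s; that is, intersecting a cross polytope with peaks with the halfspace induced by the facet F_t removes exactly the peak peak_t. -/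
open MeasureTheory Set

noncomputable def dotL {n : ℕ} (t : Fin n → ℝ) : (Fin n → ℝ) →ₗ[ℝ] ℝ where
  toFun x := ∑ i, t i * x i
  map_add' x y := by simp [mul_add, Finset.sum_add_distrib]
  map_smul' c x := by simp [Finset.mul_sum, mul_left_comm]

lemma dotL_single {n : ℕ} (t : Fin n → ℝ) (i : Fin n) (c : ℝ) :
    dotL t (Pi.single i c) = t i * c := by
  simp [dotL, Pi.single_apply, mul_ite, Finset.sum_ite_eq']

lemma cross_subset_halfspace {n : ℕ} {t : Fin n → ℝ} (ht : t ∈ Signs n) :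
    crossPolytope n ⊆ {x | dotL t x ≤ 1} := by
  apply convexHull_min _ (convex_halfSpace_le (dotL t).isLinear 1)
  rintro x (⟨i, rfl⟩ | ⟨i, rfl⟩) <;> rw [mem_setOf_eq, dotL_single] <;>
    rcases ht i with h | h <;> rw [h] <;> norm_num

lemma peak_ne_subset_halfspace {n : ℕ} (hn : 2 ≤ n) {s t : Fin n → ℝ}
    (hs : s ∈ Signs n) (ht : t ∈ Signs n) (hst : s ≠ t) :
    peak n s ⊆ {x | dotL t x ≤ 1} := by
  apply convexHull_min _ (convex_halfSpace_le (dotL t).isLinear 1)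
  rintro x (⟨i, rfl⟩ | rfl)
  · rw [mem_setOf_eq, dotL_single]
    rcases hs i with h | h <;> rcases ht i with h' | h' <;> rw [h, h'] <;> norm_num
  · rw [mem_setOf_eq, LinearMap.map_smul, smul_eq_mul]
    obtain ⟨j, hj⟩ : ∃ j, s j ≠ t j := by
      by_contra h; push_neg at h; exact hst (funext h)
    have hjv : t j * s j = -1 := by
      rcases hs j with h | h <;> rcases ht j with h' | h' <;>
        first
          | (exfalso; exact hj (h.trans h'.symm))
          | (rw [h, h']; norm_num)
    have hsum : dotL t s ≤ (n : ℝ) - 2 := by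
      have h1 : ∑ i ∈ Finset.univ.erase j, t i * s i ≤ (n - 1 : ℕ) • (1 : ℝ) := by
        apply Finset.sum_le_card_nsmul _ _ _ ?_ |>.trans_eq (by
          rw [Finset.card_erase_of_mem (Finset.mem_univ j), Finset.card_univ,
            Fintype.card_fin])
        intro i _
        rcases hs i with h | h <;> rcases ht i with h' | h' <;> rw [h, h'] <;> norm_num
      have h2 : ((n - 1 : ℕ) : ℝ) = (n : ℝ) - 1 := by
        rw [Nat.cast_sub (by omega)]; norm_num
      have h3 : dotL t s = ∑ i ∈ Finset.univ.erase j, t i * s i + t j * s j :=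
        (Finset.sum_erase_add _ _ (Finset.mem_univ j)).symm
      rw [h3, hjv]
      rw [nsmul_eq_mul, mul_one, h2] at h1
      linarith
    have hn1 : (0 : ℝ) < (n : ℝ) - 1 := by
      have : (2 : ℝ) ≤ n := by exact_mod_cast hn
      linarith
    have h4 : ((n : ℝ) - 1)⁻¹ * dotL t s ≤ ((n : ℝ) - 1)⁻¹ * ((n : ℝ) - 1) :=
      mul_le_mul_of_nonneg_left (hsum.trans (by linarith)) (inv_pos.mpr hn1).le
    rwa [inv_mul_cancel₀ hn1.ne'] at h4

lemma peak_self_inter {n : ℕ} (hn : 2 ≤ n) {t : Fin n → ℝ} (ht : t ∈ Signs n)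
    {x : Fin n → ℝ} (hx : x ∈ peak n t) (hfx : dotL t x ≤ 1) :
    x ∈ crossPolytope n := by
  have hne : (Set.range fun i : Fin n => Pi.single i (t i)).Nonempty :=
    Set.range_nonempty (ι := Fin n) (h := ⟨⟨0, by omega⟩⟩) _
  rw [peak, Set.union_singleton, convexHull_insert hne] at hx
  rw [mem_convexJoin] at hx
  obtain ⟨p, hp, z, hz, hseg⟩ := hx
  rw [mem_singleton_iff] at hp
  subst hp

  have hz1 : dotL t z = 1 := by
    have : z ∈ {w | dotL t w = 1} := by
      refine convexHull_min ?_ (convex_hyperplane (dotL t).isLinear 1) hz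
      rintro w ⟨i, rfl⟩
      rw [mem_setOf_eq, dotL_single]
      rcases ht i with h | h <;> rw [h] <;> norm_num
    exact this
  obtain ⟨a, b, ha, hb, hab, hx⟩ := hseg
  have hn1 : (0 : ℝ) < (n : ℝ) - 1 := by
    have : (2 : ℝ) ≤ n := by exact_mod_cast hn
    linarith
  have happ : dotL t (((n : ℝ) - 1)⁻¹ • t) = ((n : ℝ) - 1)⁻¹ * n := by
    rw [LinearMap.map_smul, smul_eq_mul]
    congr 1
    have : ∀ i, t i * t i = 1 := fun i => by rcases ht i with h | h <;> rw [h] <;> norm_num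
    show ∑ i, t i * t i = n
    simp [this]
  have hfx' : dotL t x = a * (((n : ℝ) - 1)⁻¹ * n) + b := by
    rw [← hx, map_add, LinearMap.map_smul, happ, LinearMap.map_smul, hz1, smul_eq_mul, smul_eq_mul, mul_one]
  have ha0 : a = 0 := by
    by_contra h
    have ha' : 0 < a := lt_of_le_of_ne ha (Ne.symm h)
    have hc : ((n : ℝ) - 1)⁻¹ * ((n : ℝ) - 1) = 1 := inv_mul_cancel₀ (ne_of_gt hn1)
    have hcpos : (0 : ℝ) < ((n : ℝ) - 1)⁻¹ := inv_pos.mpr hn1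
    nlinarith [hfx, hfx', hab]
  have hxz : x = z := by
    rw [← hx, ha0]
    have : b = 1 := by linarith
    rw [this]; simp
  rw [hxz]
  refine convexHull_mono ?_ hz
  rintro w ⟨i, rfl⟩
  rcases ht i with h | h
  · exact Or.inl ⟨i, by simp [h]⟩
  · exact Or.inr ⟨i, by simp [h]⟩

theorem inter_halfspace_removes_peak (n : ℕ) (hn : 2 ≤ n)
    (S : Set (Fin n → ℝ)) (hS : S ⊆ Signs n) (t : Fin n → ℝ) (ht : t ∈ S) :
    (crossPolytope n ∪ ⋃ s ∈ S, peak n s) ∩ {x : Fin n → ℝ | ∑ i, t i * x i ≤ 1} =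
      crossPolytope n ∪ ⋃ s ∈ S \ {t}, peak n s := by
  have htS : t ∈ Signs n := hS ht
  have hdot : ∀ x : Fin n → ℝ, (∑ i, t i * x i) = dotL t x := fun x => rfl
  ext x
  simp only [mem_inter_iff, mem_union, mem_iUnion, mem_setOf_eq, mem_diff,
    mem_singleton_iff, hdot]
  constructor
  · rintro ⟨hmem | ⟨s, hsS, hxs⟩, hfx⟩
    · exact Or.inl hmem
    · by_cases hst : s = t
      · subst hst
        exact Or.inl (peak_self_inter hn htS hxs hfx)
      · exact Or.inr ⟨s, ⟨hsS, hst⟩, hxs⟩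
  · rintro (hmem | ⟨s, ⟨hsS, hst⟩, hxs⟩)
    · exact ⟨Or.inl hmem, cross_subset_halfspace htS hmem⟩
    · exact ⟨Or.inr ⟨s, hsS, hxs⟩,
        peak_ne_subset_halfspace hn (hS hsS) htS hst hxs⟩
end

section
/- Let n ≥ 2 and let s ∈ {-1,1}^n. The n-dimensional Lebesgue volume of the peak peak_s = conv(F_s ∪ {s/(n-1)}) equals 1/((n-1)·n!). In particular, vol(peak_s) = vol(O_n)/(2^n (n-1)). -/
/-!
The peak is the simplex with apex `a • s`, `a = (n - 1)⁻¹`, and vertices `s i • e i`, so it is the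
image of the corner simplex `{y ≥ 0, ∑ y ≤ 1}` (volume `1 / n!`, by Fubini and induction on `n`)
under the affine map sending `0 ↦ a • s` and `e i ↦ s i • e i`. The matrix of its linear part is
`(1 - a J) * diagonal s`, of determinant `(1 - n a) ∏ s i = -a ∏ s i` by the matrix determinant
lemma. The cross polytope is the closed unit ball of the `ℓ¹` norm, whose volume `2 ^ n / n!` is
the case `p = 1` of `volume_sum_rpow_le`.
-/

open MeasureTheory Set ENNReal

def cornerSimplex (n : ℕ) (r : ℝ) : Set (Fin n → ℝ) :=
  {y | (∀ i, 0 ≤ y i) ∧ ∑ i, y i ≤ r}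

namespace cornerSimplex

theorem isClosed (n : ℕ) (r : ℝ) : IsClosed (cornerSimplex n r) :=
  (isClosed_le continuous_const continuous_id).inter
    (isClosed_le (continuous_finsetSum _ fun i _ => continuous_apply i) continuous_const)

theorem convex (n : ℕ) (r : ℝ) : Convex ℝ (cornerSimplex n r) :=
  (convex_Ici 0).inter <| convex_halfSpace_le
    ⟨fun _ _ => Finset.sum_add_distrib, fun _ _ => (Finset.mul_sum _ _ _).symm⟩ r

theorem eq_empty_of_neg {n : ℕ} {r : ℝ} (hr : r < 0) : cornerSimplex n r = ∅ :=
  eq_empty_of_forall_notMem fun _ ⟨hy, hsum⟩ =>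
    (Finset.sum_nonneg fun i _ => hy i).not_gt (hsum.trans_lt hr)

theorem cons_mem_iff {n : ℕ} {r t : ℝ} {y : Fin n → ℝ} :
    Fin.cons t y ∈ cornerSimplex (n + 1) r ↔ 0 ≤ t ∧ y ∈ cornerSimplex n (r - t) := by
  simp only [cornerSimplex, mem_ofPred_eq, Fin.forall_fin_succ, Fin.sum_univ_succ, Fin.cons_zero,
    Fin.cons_succ, le_sub_iff_add_le', and_assoc]

end cornerSimplex

theorem lintegral_Icc_sub_pow_div_factorial (n : ℕ) {r : ℝ} (hr : 0 ≤ r) :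
    ∫⁻ t in Icc 0 r, ENNReal.ofReal ((r - t) ^ n / n.factorial) =
      ENNReal.ofReal (r ^ (n + 1) / (n + 1).factorial) := by
  have hcont : Continuous fun t : ℝ => (r - t) ^ n / n.factorial := by fun_prop
  rw [← ofReal_integral_eq_lintegral_ofReal hcont.integrableOn_Icc
    ((ae_restrict_iff' measurableSet_Icc).2 (.of_forall fun t ht =>
      div_nonneg (pow_nonneg (sub_nonneg.2 ht.2) n) (Nat.cast_nonneg _))),
    integral_Icc_eq_integral_Ioc, ← intervalIntegral.integral_of_le hr,
    intervalIntegral.integral_div, intervalIntegral.integral_comp_sub_left (fun x => x ^ n) r,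
    sub_self, sub_zero, integral_pow, zero_pow n.succ_ne_zero, sub_zero, Nat.factorial_succ]
  push_cast
  field_simp

theorem volume_cornerSimplex (n : ℕ) {r : ℝ} (hr : 0 ≤ r) :
    volume (cornerSimplex n r) = ENNReal.ofReal (r ^ n / n.factorial) := by
  induction n generalizing r with
  | zero =>
    rw [show cornerSimplex 0 r = univ by ext y; simp [cornerSimplex, hr],
      volume_pi, Measure.pi_of_empty]
    simp
  | succ n ih =>
    set e := MeasurableEquiv.piFinSuccAbove (fun _ : Fin (n + 1) => ℝ) 0
    have hslice (t : ℝ) : volume (Prod.mk t ⁻¹' (e.symm ⁻¹' cornerSimplex (n + 1) r)) =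
        (Icc 0 r).indicator (fun t => ENNReal.ofReal ((r - t) ^ n / n.factorial)) t := by
      have hpre : Prod.mk t ⁻¹' (e.symm ⁻¹' cornerSimplex (n + 1) r) =
          {y | 0 ≤ t ∧ y ∈ cornerSimplex n (r - t)} := by
        ext y
        simp [e, MeasurableEquiv.piFinSuccAbove_symm_apply, Fin.insertNthEquiv,
          Fin.insertNth_zero', cornerSimplex.cons_mem_iff]
      rw [hpre]
      by_cases ht : t ∈ Icc 0 r
      · simp [ht.1, ih (sub_nonneg.2 ht.2), indicator_of_mem ht]
      · rw [indicator_of_notMem ht]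
        rcases not_and_or.1 ht with ht | ht
        · simp [ht]
        · simp [cornerSimplex.eq_empty_of_neg (sub_neg.2 (not_le.1 ht))]
    have hmeas := (cornerSimplex.isClosed (n + 1) r).measurableSet
    rw [← (volume_preserving_piFinSuccAbove (fun _ : Fin (n + 1) => ℝ) 0).symm.measure_preimage
      hmeas.nullMeasurableSet, Measure.volume_eq_prod,
      Measure.prod_apply (hmeas.preimage e.symm.measurable), lintegral_congr hslice,
      lintegral_indicator measurableSet_Icc, lintegral_Icc_sub_pow_div_factorial n hr]

theorem cornerSimplex_one_eq_convexHull (n : ℕ) :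
    cornerSimplex n 1 = convexHull ℝ (insert 0 (range fun i => Pi.single i 1)) := by
  refine Subset.antisymm (fun y ⟨hy, hsum⟩ => ?_) (convexHull_min ?_ (cornerSimplex.convex n 1))
  -- `y = (1 - ∑ i, y i) • 0 + ∑ i, y i • e i`
  · have hmem := (convex_convexHull ℝ (insert (0 : Fin n → ℝ) (range fun i => Pi.single i 1))).sum_mem
      (t := Finset.univ) (w := fun o : Option (Fin n) => o.elim (1 - ∑ i, y i) y)
      (z := fun o => o.elim 0 fun i => Pi.single i 1)
      (by rintro (_ | i) - <;> simp [hsum, hy])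
      (by simp [Fintype.sum_option])
      (by rintro (_ | i) - <;> exact subset_convexHull ℝ _ (by simp))
    convert hmem
    ext j
    simp [Fintype.sum_option, Finset.sum_apply, Pi.single_apply]
  · rintro _ (rfl | ⟨i, rfl⟩)
    · simp [cornerSimplex]
    · refine ⟨fun j => ?_, by simp⟩
      by_cases h : j = i <;> simp [h]

theorem convexHull_insert_range_eq_image {E : Type*} [AddCommGroup E] [Module ℝ E] {n : ℕ}
    (v₀ : E) (v : Fin n → E) :
    convexHull ℝ (insert v₀ (range v)) =
      (fun y => v₀ + Fintype.linearCombination ℝ (fun i => v i - v₀) y) '' cornerSimplex n 1 := by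
  let A : (Fin n → ℝ) →ᵃ[ℝ] E :=
    AffineMap.const ℝ _ v₀ + (Fintype.linearCombination ℝ fun i => v i - v₀).toAffineMap
  have hA : A = fun y => v₀ + Fintype.linearCombination ℝ (fun i => v i - v₀) y := rfl
  rw [← hA, cornerSimplex_one_eq_convexHull, AffineMap.image_convexHull, image_insert_eq,
    ← range_comp]
  congr
  · simp [hA]
  · ext i
    simp [hA, Fintype.linearCombination_apply_single]

theorem volume_convexHull_insert_range {n : ℕ} (v₀ : Fin n → ℝ) (v : Fin n → Fin n → ℝ) :
    volume (convexHull ℝ (insert v₀ (range v))) =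
      ENNReal.ofReal (|(Matrix.of fun i => v i - v₀).det| / n.factorial) := by
  set M := Matrix.of fun i => v i - v₀
  have hL : Fintype.linearCombination ℝ (fun i => v i - v₀) = Matrix.toLin' M.transpose := by
    ext y
    simp [M]
  rw [convexHull_insert_range_eq_image, hL,
    show (fun y => v₀ + Matrix.toLin' M.transpose y) = (v₀ +ᵥ ·) ∘ Matrix.toLin' M.transpose
      from rfl, image_comp, image_vadd, measure_vadd, Measure.addHaar_image_linearMap,
    LinearMap.det_toLin', Matrix.det_transpose, volume_cornerSimplex n zero_le_one, one_pow,
    ← ENNReal.ofReal_mul (abs_nonneg _), mul_one_div]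

theorem det_single_sub_smul {n : ℕ} (s : Fin n → ℝ) (a : ℝ) :
    (Matrix.of fun i => Pi.single i (s i) - a • s).det = (1 - n * a) * ∏ i, s i := by
  have hfactor : (Matrix.of fun i => Pi.single i (s i) - a • s) =
      (1 + Matrix.replicateCol Unit (fun _ : Fin n => -a) *
        Matrix.replicateRow Unit (fun _ : Fin n => (1 : ℝ))) * Matrix.diagonal s := by
    ext i j
    rw [Matrix.mul_diagonal]
    by_cases h : i = j <;> simp [h, Matrix.mul_apply, add_mul, sub_eq_add_neg]
  rw [hfactor, Matrix.det_mul, Matrix.det_one_add_replicateCol_mul_replicateRow,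
    Matrix.det_diagonal]
  simp [dotProduct, sub_eq_add_neg]

theorem volume_peak_eq_abs_prod {n : ℕ} (hn : 2 ≤ n) (s : Fin n → ℝ) :
    volume (peak n s) = ENNReal.ofReal (|∏ i, s i| / (((n : ℝ) - 1) * n.factorial)) := by
  have hn1 : (0 : ℝ) < n - 1 := by
    rw [sub_pos]
    exact_mod_cast hn
  have hcoeff : 1 - n * ((n : ℝ) - 1)⁻¹ = -((n : ℝ) - 1)⁻¹ := by
    field_simp
    ring
  rw [peak, union_singleton, volume_convexHull_insert_range, det_single_sub_smul, hcoeff, abs_mul,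
    abs_neg, abs_of_pos (inv_pos.2 hn1), inv_mul_eq_div, div_div]

theorem crossPolytope_eq {n : ℕ} (hn : 0 < n) : crossPolytope n = {x | ∑ i, |x i| ≤ 1} := by
  have hconvex : Convex ℝ {x : Fin n → ℝ | ∑ i, |x i| ≤ 1} := by
    intro x hx y hy a b ha hb hab
    calc ∑ i, |a * x i + b * y i| ≤ ∑ i, (a * |x i| + b * |y i|) :=
          Finset.sum_le_sum fun i _ => (abs_add_le _ _).trans_eq <| by
            rw [abs_mul, abs_mul, abs_of_nonneg ha, abs_of_nonneg hb]
      _ = a * ∑ i, |x i| + b * ∑ i, |y i| := by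
          rw [Finset.sum_add_distrib, Finset.mul_sum, Finset.mul_sum]
      _ ≤ a * 1 + b * 1 := by gcongr <;> assumption
      _ = 1 := by rw [mul_one, mul_one, hab]
  refine Subset.antisymm (convexHull_min ?_ hconvex) fun x hx => ?_
  · rintro _ (⟨i, rfl⟩ | ⟨i, rfl⟩) <;> simp [Pi.single_apply, apply_ite]
  have hzero : (0 : Fin n → ℝ) ∈ crossPolytope n := by
    obtain ⟨i₀⟩ : Nonempty (Fin n) := Fin.pos_iff_nonempty.1 hn
    have hpos : Pi.single i₀ 1 ∈ crossPolytope n :=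
      subset_convexHull ℝ _ (mem_union_left _ ⟨i₀, rfl⟩)
    have hneg : Pi.single i₀ (-1) ∈ crossPolytope n :=
      subset_convexHull ℝ _ (mem_union_right _ ⟨i₀, rfl⟩)
    have hmid := convex_convexHull ℝ _ hpos hneg (by norm_num : (0 : ℝ) ≤ 1 / 2)
      (by norm_num : (0 : ℝ) ≤ 1 / 2) (by norm_num)
    rwa [← smul_add, ← Pi.single_add, add_neg_cancel, Pi.single_zero, smul_zero] at hmid
  let σ : Fin n → ℝ := fun i => if 0 ≤ x i then 1 else -1
  have hsub : convexHull ℝ (insert 0 (range fun i => Pi.single i (σ i))) ⊆ crossPolytope n :=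
    convexHull_min (insert_subset hzero (range_subset_iff.2 fun i =>
      subset_convexHull ℝ _ (by by_cases h : 0 ≤ x i <;> simp [σ, h]))) (convex_convexHull ℝ _)
  refine hsub ?_
  rw [convexHull_insert_range_eq_image]
  refine ⟨fun i => |x i|, ⟨fun i => abs_nonneg _, hx⟩, funext fun j => ?_⟩
  by_cases h : 0 ≤ x j
  · simp [Fintype.linearCombination_apply, Pi.single_apply, σ, h, abs_of_nonneg h]
  · simp [Fintype.linearCombination_apply, Pi.single_apply, σ, h, abs_of_neg (not_le.1 h)]

theorem volume_crossPolytope {n : ℕ} (hn : 0 < n) :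
    volume (crossPolytope n) = ENNReal.ofReal (2 ^ n / n.factorial) := by
  have : Nonempty (Fin n) := Fin.pos_iff_nonempty.1 hn
  have hball := volume_sum_rpow_le (Fin n) le_rfl 1
  simp only [Real.rpow_one, div_one] at hball
  rw [crossPolytope_eq hn, hball]
  simp [one_add_one_eq_two, Real.Gamma_nat_eq_factorial]

theorem volume_peak (n : ℕ) (hn : 2 ≤ n) (s : Fin n → ℝ)
    (hs : ∀ i, s i = 1 ∨ s i = -1) :
    volume (peak n s) = ENNReal.ofReal (1 / (((n : ℝ) - 1) * n.factorial)) ∧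
    volume (peak n s) = volume (crossPolytope n) / (2 ^ n * ((n : ℝ≥0∞) - 1)) := by
  have hprod : |∏ i, s i| = 1 := by
    rw [Finset.abs_prod]
    exact Finset.prod_eq_one fun i _ => by rcases hs i with h | h <;> simp [h]
  have hpeak := volume_peak_eq_abs_prod hn s
  rw [hprod] at hpeak
  refine ⟨hpeak, ?_⟩
  have hn1 : (0 : ℝ) < n - 1 := by
    rw [sub_pos]
    exact_mod_cast hn
  have hdenom : (2 : ℝ≥0∞) ^ n * ((n : ℝ≥0∞) - 1) = ENNReal.ofReal (2 ^ n * ((n : ℝ) - 1)) := by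
    rw [ENNReal.ofReal_mul (by positivity), ENNReal.ofReal_pow zero_le_two,
      ENNReal.ofReal_sub _ zero_le_one]
    simp
  rw [hpeak, volume_crossPolytope (by omega), hdenom, ← ENNReal.ofReal_div_of_pos (by positivity)]
  congr 1
  field_simp
end

section
/- (Gilbert–Varshamov bound) Let Σ be a finite alphabet of size q ≥ 2, let n ≥ 1 and 1 ≤ d ≤ n. Then there exists a code C ⊆ Σ^n whose distinct codewords have pairwise Hamming distance at least d and whose cardinality satisfies |C| ≥ q^n / V_q(n, d-1), where V_q(n, r) := ∑_{i=0}^{r} C(n,i)·(q-1)^i. -/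
/-!
A code of minimum distance `d` that is maximal (here: of maximal size) is a covering code:
a word at distance `≥ d` from every codeword could be added to it. So the `q ^ n` words are
covered by `|C|` Hamming balls of radius `d - 1`, and each such ball has at most
`V_q(n, d - 1)` elements: a word at distance `i` from the centre is determined by the `i`
coordinates where it differs and one of the `q - 1` other letters at each of them.
-/

open Finset

section Hamming

variable {ι A : Type*} [Fintype ι] [DecidableEq ι] [Fintype A] [DecidableEq A]

theorem card_piFinset_ite_erase_singleton (c : ι → A) (s : Finset ι) :
    #(Fintype.piFinset fun j => if j ∈ s then univ.erase (c j) else {c j}) =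
      (Fintype.card A - 1) ^ #s := by
  rw [Fintype.card_piFinset]
  simp_rw [apply_ite card, card_erase_of_mem (mem_univ _), card_singleton, card_univ]
  rw [prod_ite_mem, univ_inter, prod_const]

theorem card_hammingSphere_le (c : ι → A) (i : ℕ) :
    #{y | hammingDist y c = i} ≤ (Fintype.card ι).choose i * (Fintype.card A - 1) ^ i := by
  have hcover : ({y | hammingDist y c = i} : Finset (ι → A)) ⊆
      (powersetCard i univ).biUnion fun s =>
        Fintype.piFinset fun j => if j ∈ s then univ.erase (c j) else {c j} := by
    intro y hy
    rw [mem_filter] at hy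
    refine mem_biUnion.2
      ⟨({j | y j ≠ c j} : Finset ι), mem_powersetCard.2 ⟨subset_univ _, hy.2⟩, ?_⟩
    rw [Fintype.mem_piFinset]
    intro j
    by_cases hj : y j = c j <;> simp [hj]
  calc #{y | hammingDist y c = i}
      ≤ ∑ s ∈ powersetCard i univ,
          #(Fintype.piFinset fun j => if j ∈ s then univ.erase (c j) else {c j}) :=
        (card_le_card hcover).trans card_biUnion_le
    _ = (Fintype.card ι).choose i * (Fintype.card A - 1) ^ i := by
        rw [sum_congr rfl fun s hs => by
          rw [card_piFinset_ite_erase_singleton, (mem_powersetCard.1 hs).2]]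
        rw [sum_const, card_powersetCard, card_univ, smul_eq_mul]

theorem card_hammingBall_le (c : ι → A) (r : ℕ) :
    #{y | hammingDist y c < r} ≤
      ∑ i ∈ range r, (Fintype.card ι).choose i * (Fintype.card A - 1) ^ i := by
  have hcover : ({y | hammingDist y c < r} : Finset (ι → A)) ⊆
      (range r).biUnion fun i => {y | hammingDist y c = i} := by
    intro y hy
    rw [mem_filter] at hy
    exact mem_biUnion.2 ⟨_, mem_range.2 hy.2, by simp⟩
  exact (card_le_card hcover).trans <| card_biUnion_le.trans <|
    sum_le_sum fun i _ => card_hammingSphere_le c i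

theorem card_pow_le_card_mul_hammingBall (C : Finset (ι → A)) (r : ℕ)
    (hC : ∀ x, ∃ c ∈ C, hammingDist x c < r) :
    Fintype.card A ^ Fintype.card ι ≤
      #C * ∑ i ∈ range r, (Fintype.card ι).choose i * (Fintype.card A - 1) ^ i := by
  have hcover : (univ : Finset (ι → A)) ⊆ C.biUnion fun c => {y | hammingDist y c < r} := by
    intro x _
    obtain ⟨c, hc, hxc⟩ := hC x
    exact mem_biUnion.2 ⟨c, hc, by simpa using hxc⟩
  calc Fintype.card A ^ Fintype.card ι = #(univ : Finset (ι → A)) := by simp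
    _ ≤ ∑ c ∈ C, #{y | hammingDist y c < r} := (card_le_card hcover).trans card_biUnion_le
    _ ≤ _ := by
        rw [← smul_eq_mul, ← sum_const]
        exact sum_le_sum fun c _ => card_hammingBall_le c r

end Hamming

theorem exists_separated_finset_covering {α : Type*} [Fintype α] [DecidableEq α] (δ : α → α → ℕ)
    (hδ : ∀ x y, δ x y = δ y x) (d : ℕ) :
    ∃ C : Finset α, (∀ x ∈ C, ∀ y ∈ C, x ≠ y → d ≤ δ x y) ∧
      ∀ x ∉ C, ∃ c ∈ C, δ x c < d := by
  let Separated : Finset α → Prop := fun C => ∀ x ∈ C, ∀ y ∈ C, x ≠ y → d ≤ δ x y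
  obtain ⟨C, hCmem, hmax⟩ :=
    exists_max_image {C | Separated C} card ⟨∅, by simp [Separated]⟩
  have hC : Separated C := (mem_filter.1 hCmem).2
  refine ⟨C, hC, fun x hx => ?_⟩
  by_contra! hfar
  have hins : Separated (insert x C) := by
    intro a ha b hb hab
    rcases mem_insert.1 ha with rfl | haC <;> rcases mem_insert.1 hb with rfl | hbC
    · exact absurd rfl hab
    · exact hfar b hbC
    · exact hδ b a ▸ hfar a haC
    · exact hC a haC b hbC hab
  have := hmax _ (mem_filter.2 ⟨mem_univ _, hins⟩)
  rw [card_insert_of_notMem hx] at this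
  omega

theorem gilbert_varshamov_general (A : Type*) [Fintype A] [DecidableEq A]
    (q n d : ℕ) (hq : Fintype.card A = q) (hq2 : 2 ≤ q)
    (hd1 : 1 ≤ d) :
    ∃ C : Finset (Fin n → A),
      (∀ x ∈ C, ∀ y ∈ C, x ≠ y → d ≤ hammingDist x y) ∧
      (q : ℝ) ^ n / (∑ i ∈ Finset.range d, (n.choose i : ℝ) * ((q : ℝ) - 1) ^ i)
        ≤ C.card := by
  obtain ⟨C, hsep, hmaximal⟩ :=
    exists_separated_finset_covering (α := Fin n → A) hammingDist hammingDist_comm d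
  have hcover : ∀ x, ∃ c ∈ C, hammingDist x c < d := fun x =>
    if hx : x ∈ C then ⟨x, hx, by simpa⟩ else hmaximal x hx
  have hcount := card_pow_le_card_mul_hammingBall C d hcover
  rw [Fintype.card_fin, hq] at hcount
  have hvolume_pos : (0 : ℝ) < ∑ i ∈ range d, (n.choose i : ℝ) * ((q : ℝ) - 1) ^ i := by
    have hq1 : (1 : ℝ) ≤ q := by exact_mod_cast (by omega : 1 ≤ q)
    exact sum_pos' (fun i _ => by positivity) ⟨0, mem_range.2 hd1, by simp⟩
  refine ⟨C, hsep, (div_le_iff₀ hvolume_pos).2 ?_⟩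
  have hcount_real := (Nat.cast_le (α := ℝ)).2 hcount
  push_cast [Nat.cast_sub (by omega : 1 ≤ q)] at hcount_real
  exact hcount_real

/-- Gilbert–Varshamov bound: over an alphabet of size `q`, there is a code of
length `n` with minimum distance `d` and at least `q^n / V_q(n, d-1)` codewords. -/
theorem gilbert_varshamov (A : Type*) [Fintype A] [DecidableEq A]
    (q n d : ℕ) (hq : Fintype.card A = q) (hq2 : 2 ≤ q)
    (hn : 1 ≤ n) (hd1 : 1 ≤ d) (hdn : d ≤ n) :
    ∃ C : Finset (Fin n → A),
      (∀ x ∈ C, ∀ y ∈ C, x ≠ y → d ≤ hammingDist x y) ∧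
      (q : ℝ) ^ n / (∑ i ∈ Finset.range d, (n.choose i : ℝ) * ((q : ℝ) - 1) ^ i)
        ≤ C.card :=
  gilbert_varshamov_general A q n d hq hq2 hd1
end
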